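/- Given a sequence of Markov kernels (K_i) on a finite set V and a positive probability measure μ_0, set μ_n = μ_0 K_{0,n} and let σ_1(i) be the second largest singular value of K_i : ℓ²(μ_i) → ℓ²(μ_{i-1}). Then for all x, z ∈ V and n ≥ 1, |K_{0,n}(x,z)/μ_n(z) − 1| ≤ (1/μ_0(x) − 1)^{1/2} (1/μ_n(z) − 1)^{1/2} ∏_{i=1}^n σ_1(i). -/

import Mathlib

open BigOperators Finset

/-- The composed kernel K_{0,n} = K₁K₂⋯K_n of a sequence of kernels. -/
def Kprod {V : Type*} [Fintype V] [DecidableEq V] (K : ℕ → Matrix V V ℝ) :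
    ℕ → Matrix V V ℝ
  | 0 => 1
  | n + 1 => Kprod K n * K (n + 1)

/-!
Write `h_z = δ_z / μ_n(z) - 1`, the density of `δ_z` with respect to `μ_n`, centred. Then
`K_{0,n} h_z (x) = K_{0,n}(x,z)/μ_n(z) - 1`, and `h_z` has `μ_n`-mean zero with
`‖h_z‖²_{μ_n} = 1/μ_n(z) - 1`. Each `K_i` maps `μ_i`-mean-zero functions to `μ_{i-1}`-mean-zero
functions (by duality, since `μ_{i-1} K_i = μ_i`) and shrinks their norm by `σ₁(i)`, so
`‖K_{0,n} h_z‖²_{μ_0} ≤ (∏ σ₁(i))² (1/μ_n(z) - 1)`. Finally a `μ_0`-mean-zero `g` satisfies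
`g(x) = ⟨g, h_x⟩_{μ_0}`, so Cauchy–Schwarz gives `g(x)² ≤ (1/μ_0(x) - 1) ‖g‖²_{μ_0}`.
-/

section

variable {V : Type*} [Fintype V]

lemma sum_mulVec_mul_eq_sum_mul_vecMul (A : Matrix V V ℝ) (f ν : V → ℝ) :
    ∑ y, A.mulVec f y * ν y = ∑ y, f y * Matrix.vecMul ν A y := by
  simpa only [dotProduct, mul_comm] using Matrix.dotProduct_mulVec ν A f

lemma sum_vecMul_eq_sum_of_sum_row_eq_one {A : Matrix V V ℝ} (hA : ∀ x, ∑ y, A x y = 1)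
    (ν : V → ℝ) : ∑ y, Matrix.vecMul ν A y = ∑ x, ν x := by
  have h := sum_mulVec_mul_eq_sum_mul_vecMul A (fun _ => 1) ν
  simp only [Matrix.mulVec, dotProduct, mul_one, hA, one_mul] at h
  exact h.symm

variable [DecidableEq V]

lemma sum_Kprod_row_eq_one {K : ℕ → Matrix V V ℝ} (hK1 : ∀ i, 1 ≤ i → ∀ x, ∑ y, K i x y = 1)
    (n : ℕ) (x : V) : ∑ y, Kprod K n x y = 1 := by
  induction n generalizing x with
  | zero => simp [Kprod, Matrix.one_apply]
  | succ n ih =>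
    simp only [Kprod, Matrix.mul_apply]
    rw [sum_comm]
    simp [← mul_sum, hK1 (n + 1) n.succ_pos, ih]

noncomputable def centeredDensity (ν : V → ℝ) (z : V) : V → ℝ :=
  fun y => (if y = z then (ν z)⁻¹ else 0) - 1

lemma mulVec_centeredDensity {A : Matrix V V ℝ} (hA : ∀ x, ∑ y, A x y = 1) (ν : V → ℝ)
    (x z : V) : A.mulVec (centeredDensity ν z) x = A x z / ν z - 1 := by
  simp [centeredDensity, Matrix.mulVec, dotProduct, mul_sub, hA, div_eq_mul_inv]

lemma sum_mul_centeredDensity_mul {ν : V → ℝ} {z : V} (hνz : ν z ≠ 0) (g : V → ℝ) :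
    ∑ y, g y * centeredDensity ν z y * ν y = g z - ∑ y, g y * ν y := by
  simp [centeredDensity, mul_sub, sub_mul, sum_sub_distrib, hνz]

lemma sum_centeredDensity_mul_eq_zero {ν : V → ℝ} {z : V} (hνz : ν z ≠ 0)
    (hν1 : ∑ y, ν y = 1) : ∑ y, centeredDensity ν z y * ν y = 0 := by
  simpa [hν1] using sum_mul_centeredDensity_mul hνz (fun _ => 1)

lemma sum_centeredDensity_sq_mul {ν : V → ℝ} {z : V} (hνz : ν z ≠ 0) (hν1 : ∑ y, ν y = 1) :
    ∑ y, centeredDensity ν z y ^ 2 * ν y = 1 / ν z - 1 := by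
  have h := sum_mul_centeredDensity_mul hνz (centeredDensity ν z)
  simp only [← sq, sum_centeredDensity_mul_eq_zero hνz hν1] at h
  rw [h]
  simp [centeredDensity]

lemma sq_le_of_sum_mul_eq_zero {ν : V → ℝ} (hν : ∀ y, 0 < ν y) (hν1 : ∑ y, ν y = 1)
    {g : V → ℝ} (hg : ∑ y, g y * ν y = 0) (x : V) :
    g x ^ 2 ≤ (1 / ν x - 1) * ∑ y, g y ^ 2 * ν y := by
  have hνx := (hν x).ne'
  have hgx : g x = ∑ y, g y * centeredDensity ν x y * ν y := by
    rw [sum_mul_centeredDensity_mul hνx, hg, sub_zero]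
  rw [hgx, ← sum_centeredDensity_sq_mul hνx hν1, mul_comm]
  exact sum_sq_le_sum_mul_sum_of_sq_le_mul _
    (fun y _ => mul_nonneg (sq_nonneg _) (hν y).le)
    (fun y _ => mul_nonneg (sq_nonneg _) (hν y).le)
    (fun y _ => le_of_eq (by ring))

lemma sum_Kprod_mulVec_sq_mul_le {K : ℕ → Matrix V V ℝ} {μ : ℕ → V → ℝ}
    (hstep : ∀ n, μ (n + 1) = Matrix.vecMul (μ n) (K (n + 1))) {σ₁ : ℕ → ℝ}
    (hσ₁ : ∀ i, 1 ≤ i → ∀ f : V → ℝ, (∑ x, f x * μ i x = 0) →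
      ∑ x, ((K i).mulVec f x) ^ 2 * μ (i - 1) x ≤ (σ₁ i) ^ 2 * ∑ x, (f x) ^ 2 * μ i x)
    (n : ℕ) (f : V → ℝ) (hf : ∑ y, f y * μ n y = 0) :
    ∑ y, (Kprod K n).mulVec f y ^ 2 * μ 0 y ≤
      (∏ i ∈ Icc 1 n, σ₁ i) ^ 2 * ∑ y, f y ^ 2 * μ n y := by
  induction n generalizing f with
  | zero => simp [Kprod]
  | succ n ih =>
    have hKf : ∑ y, (K (n + 1)).mulVec f y * μ n y = 0 := by
      rw [sum_mulVec_mul_eq_sum_mul_vecMul, ← hstep, hf]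
    calc ∑ y, (Kprod K (n + 1)).mulVec f y ^ 2 * μ 0 y
        = ∑ y, (Kprod K n).mulVec ((K (n + 1)).mulVec f) y ^ 2 * μ 0 y := by
          simp only [Kprod, Matrix.mulVec_mulVec]
      _ ≤ (∏ i ∈ Icc 1 n, σ₁ i) ^ 2 * ∑ y, (K (n + 1)).mulVec f y ^ 2 * μ n y := ih _ hKf
      _ ≤ (∏ i ∈ Icc 1 n, σ₁ i) ^ 2 * (σ₁ (n + 1) ^ 2 * ∑ y, f y ^ 2 * μ (n + 1) y) := by
          gcongr
          exact hσ₁ (n + 1) n.succ_pos f hf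
      _ = (∏ i ∈ Icc 1 (n + 1), σ₁ i) ^ 2 * ∑ y, f y ^ 2 * μ (n + 1) y := by
          rw [prod_Icc_succ_top (by omega)]
          ring

end

theorem stmt19_general {V : Type*} [Fintype V] [DecidableEq V]
    (K : ℕ → Matrix V V ℝ)
    (hK1 : ∀ i, 1 ≤ i → ∀ x, ∑ y, K i x y = 1)
    (μ : ℕ → V → ℝ)
    (hμpos : ∀ n x, 0 < μ n x) (hμ1 : ∑ x, μ 0 x = 1)
    (hμ : ∀ n, μ n = Matrix.vecMul (μ 0) (Kprod K n))
    (σ₁ : ℕ → ℝ) (hσ₁0 : ∀ i, 0 ≤ σ₁ i)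
    (hσ₁ : ∀ i, 1 ≤ i → ∀ f : V → ℝ, (∑ x, f x * μ i x = 0) →
      ∑ x, ((K i).mulVec f x) ^ 2 * μ (i - 1) x ≤ (σ₁ i) ^ 2 * ∑ x, (f x) ^ 2 * μ i x) :
    ∀ n, 1 ≤ n → ∀ x z : V,
      |Kprod K n x z / μ n z - 1| ≤
        Real.sqrt (1 / μ 0 x - 1) * Real.sqrt (1 / μ n z - 1) * ∏ i ∈ Icc 1 n, σ₁ i := by
  intro n _ x z
  have hstep : ∀ n, μ (n + 1) = Matrix.vecMul (μ n) (K (n + 1)) := fun n => by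
    rw [hμ, hμ n, Kprod, Matrix.vecMul_vecMul]
  have hμn1 : ∑ y, μ n y = 1 := by
    rw [hμ, sum_vecMul_eq_sum_of_sum_row_eq_one (sum_Kprod_row_eq_one hK1 n), hμ1]
  have hμnz := (hμpos n z).ne'
  set P := ∏ i ∈ Icc 1 n, σ₁ i
  set g := (Kprod K n).mulVec (centeredDensity (μ n) z)
  have hgx : g x = Kprod K n x z / μ n z - 1 :=
    mulVec_centeredDensity (sum_Kprod_row_eq_one hK1 n) _ x z
  have hg : ∑ y, g y * μ 0 y = 0 := by
    rw [sum_mulVec_mul_eq_sum_mul_vecMul, ← hμ, sum_centeredDensity_mul_eq_zero hμnz hμn1]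
  have hnorm : ∑ y, g y ^ 2 * μ 0 y ≤ P ^ 2 * (1 / μ n z - 1) := by
    rw [← sum_centeredDensity_sq_mul hμnz hμn1]
    exact sum_Kprod_mulVec_sq_mul_le hstep hσ₁ n _
      (sum_centeredDensity_mul_eq_zero hμnz hμn1)
  have hA : 0 ≤ 1 / μ 0 x - 1 := by
    rw [← sum_centeredDensity_sq_mul (hμpos 0 x).ne' hμ1]
    exact sum_nonneg fun y _ => mul_nonneg (sq_nonneg _) (hμpos 0 y).le
  have hP : 0 ≤ P := prod_nonneg fun i _ => hσ₁0 i
  calc |Kprod K n x z / μ n z - 1| = Real.sqrt (g x ^ 2) := by rw [Real.sqrt_sq_eq_abs, hgx]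
    _ ≤ Real.sqrt ((1 / μ 0 x - 1) * (P ^ 2 * (1 / μ n z - 1))) :=
        Real.sqrt_le_sqrt ((sq_le_of_sum_mul_eq_zero (hμpos 0) hμ1 hg x).trans
          (mul_le_mul_of_nonneg_left hnorm hA))
    _ = Real.sqrt (1 / μ 0 x - 1) * Real.sqrt (1 / μ n z - 1) * P := by
        rw [Real.sqrt_mul hA, Real.sqrt_mul (sq_nonneg P), Real.sqrt_sq hP]
        ring

/-- Theorem 1.1 (singular value merging bound): if σ₁(i) is the second largest
singular value of K_i : ℓ²(μ_i) → ℓ²(μ_{i-1}) (expressed here by the variational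
bound on the orthogonal complement of the constants), then
|K_{0,n}(x,z)/μ_n(z) - 1| ≤ (1/μ₀(x)-1)^{1/2} (1/μ_n(z)-1)^{1/2} ∏₁ⁿ σ₁(i). -/
theorem stmt19 {V : Type*} [Fintype V] [DecidableEq V] [Nonempty V]
    (K : ℕ → Matrix V V ℝ)
    (hK0 : ∀ i, 1 ≤ i → ∀ x y, 0 ≤ K i x y)
    (hK1 : ∀ i, 1 ≤ i → ∀ x, ∑ y, K i x y = 1)
    (μ : ℕ → V → ℝ)
    (hμpos : ∀ n x, 0 < μ n x) (hμ1 : ∑ x, μ 0 x = 1)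
    (hμ : ∀ n, μ n = Matrix.vecMul (μ 0) (Kprod K n))
    (σ₁ : ℕ → ℝ) (hσ₁0 : ∀ i, 0 ≤ σ₁ i)
    (hσ₁ : ∀ i, 1 ≤ i → ∀ f : V → ℝ, (∑ x, f x * μ i x = 0) →
      ∑ x, ((K i).mulVec f x) ^ 2 * μ (i - 1) x ≤ (σ₁ i) ^ 2 * ∑ x, (f x) ^ 2 * μ i x) :
    ∀ n, 1 ≤ n → ∀ x z : V,
      |Kprod K n x z / μ n z - 1| ≤
        Real.sqrt (1 / μ 0 x - 1) * Real.sqrt (1 / μ n z - 1) * ∏ i ∈ Icc 1 n, σ₁ i :=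
  stmt19_general K hK1 μ hμpos hμ1 hμ σ₁ hσ₁0 hσ₁
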